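/- Let (F₁, F₂) and (G₁, G₂) be the CHFIS pairs, with the same parameters α_{n,m}, β_{n,m}, γ_{n,m}, for generalized interpolation data Δ = {(x_i, y_j, z_{i,j}, t_{i,j})} and Δ* = {(x*_i, y*_j, z*_{i,j}, t*_{i,j})} respectively, where the knots satisfy the invariance-of-ratio condition and S* ⊆ S. Suppose also that CHFIS pairs exist for the intermediate data Δ*₁ = {(x_i, y_j, z_{i,j}, t*_{i,j})} and Δ*₂ = {(x_i, y_j, z*_{i,j}, t*_{i,j})} (same parameters), and that M̄ ≥ 0 and δ ∈ (0,1] are such that both components of the CHFIS pair for Δ*₂ satisfy the Hölder bound |H(X) − H(X̄)| ≤ M̄ · d_M(X,X̄)^δ for all X, X̄ ∈ S. Then sup_{(x,y) ∈ S*} |F₁(x,y) − G₁(x,y)| ≤ d(Δ, Δ*), where d(Δ, Δ*) = (8β/((1−α)(1−γ))) · max_{n,m}|t_{n,m} − t*_{n,m}| + (4(1+α)/(1−α)) · max_{n,m}|z_{n,m} − z*_{n,m}| + [2βγ/((1−α)(1−γ)) + (1+α)/(1−α)] · M̄ · max_{n,m}(|x_n − x*_n| + |y_m − y*_m|)^δ,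 with α = max_{n,m}|α_{n,m}|, β = max_{n,m}|β_{n,m}|, γ = max_{n,m}|γ_{n,m}|. -/

import Mathlib

open Real Set

noncomputable section

/-- `z_eva` (resp. `t_eva`) from the paper: `z N M - z N 0 - z 0 M + z 0 0`. -/
def eva (N M : ℕ) (z : ℕ → ℕ → ℝ) : ℝ := z N M - z N 0 - z 0 M + z 0 0

/-- The coefficient `g_{n,m}` determined by the join-up conditions. -/
def gCoef (N M : ℕ) (x y : ℕ → ℝ) (z t : ℕ → ℕ → ℝ) (a b : ℕ → ℕ → ℝ) (n m : ℕ) : ℝ :=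
  (z (n-1) (m-1) - z (n-1) m - z n (m-1) + z n m
    - a n m * eva N M z - b n m * eva N M t) / ((x 0 - x N) * (y 0 - y M))

/-- The coefficient `e_{n,m}`. -/
def eCoef (N M : ℕ) (x y : ℕ → ℝ) (z t : ℕ → ℕ → ℝ) (a b : ℕ → ℕ → ℝ) (n m : ℕ) : ℝ :=
  (z (n-1) (m-1) - z n (m-1) - a n m * (z 0 0 - z N 0) - b n m * (t 0 0 - t N 0)
    - gCoef N M x y z t a b n m * (x 0 - x N) * y 0) / (x 0 - x N)

/-- The coefficient `f_{n,m}`. -/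
def fCoef (N M : ℕ) (x y : ℕ → ℝ) (z t : ℕ → ℕ → ℝ) (a b : ℕ → ℕ → ℝ) (n m : ℕ) : ℝ :=
  (z (n-1) (m-1) - z (n-1) m - a n m * (z 0 0 - z 0 M) - b n m * (t 0 0 - t 0 M)
    - gCoef N M x y z t a b n m * (y 0 - y M) * x 0) / (y 0 - y M)

/-- The coefficient `k_{n,m}`. -/
def kCoef (N M : ℕ) (x y : ℕ → ℝ) (z t : ℕ → ℕ → ℝ) (a b : ℕ → ℕ → ℝ) (n m : ℕ) : ℝ :=
  z n m - eCoef N M x y z t a b n m * x N - fCoef N M x y z t a b n m * y M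
    - a n m * z N M - b n m * t N M - gCoef N M x y z t a b n m * x N * y M

/-- `p_{n,m}(X,Y) = e_{n,m} X + f_{n,m} Y + g_{n,m} X Y + k_{n,m}`. -/
def pMap (N M : ℕ) (x y : ℕ → ℝ) (z t : ℕ → ℕ → ℝ) (a b : ℕ → ℕ → ℝ) (n m : ℕ)
    (X Y : ℝ) : ℝ :=
  eCoef N M x y z t a b n m * X + fCoef N M x y z t a b n m * Y
    + gCoef N M x y z t a b n m * X * Y + kCoef N M x y z t a b n m

/-- `q_{n,m}(X,Y) = ẽ_{n,m} X + f̃_{n,m} Y + g̃_{n,m} X Y + k̃_{n,m}`; it is `p` built from the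
data `t` with parameters `γ` and `0`. -/
def qMap (N M : ℕ) (x y : ℕ → ℝ) (t : ℕ → ℕ → ℝ) (c : ℕ → ℕ → ℝ) (n m : ℕ) (X Y : ℝ) : ℝ :=
  pMap N M x y t t c (fun _ _ => 0) n m X Y

/-- `φ_n` (resp. `ψ_m`): the affine map of `[x₀, x_N]` onto `[x_{n-1}, x_n]`. -/
def phiMap (N : ℕ) (x : ℕ → ℝ) (n : ℕ) (X : ℝ) : ℝ :=
  x (n-1) + (x n - x (n-1)) * (X - x 0) / (x N - x 0)

/-- Validity of generalized interpolation data: `N, M ≥ 1`, strictly increasing knots,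
`|α_{n,m}| < 1` and `|β_{n,m}| + |γ_{n,m}| < 1`. -/
structure DataOK (N M : ℕ) (x y : ℕ → ℝ) (a b c : ℕ → ℕ → ℝ) : Prop where
  hN : 1 ≤ N
  hM : 1 ≤ M
  hx : ∀ i < N, x i < x (i+1)
  hy : ∀ j < M, y j < y (j+1)
  ha : ∀ n m, 1 ≤ n → n ≤ N → 1 ≤ m → m ≤ M → |a n m| < 1
  hbc : ∀ n m, 1 ≤ n → n ≤ N → 1 ≤ m → m ≤ M → |b n m| + |c n m| < 1

/-- `(F₁, F₂)` is the CHFIS pair for the generalized interpolation data. -/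
def IsCHFIS (N M : ℕ) (x y : ℕ → ℝ) (z t : ℕ → ℕ → ℝ) (a b c : ℕ → ℕ → ℝ)
    (F₁ F₂ : ℝ → ℝ → ℝ) : Prop :=
  ContinuousOn (fun P : ℝ × ℝ => F₁ P.1 P.2) (Icc (x 0) (x N) ×ˢ Icc (y 0) (y M)) ∧
  ContinuousOn (fun P : ℝ × ℝ => F₂ P.1 P.2) (Icc (x 0) (x N) ×ˢ Icc (y 0) (y M)) ∧
  (∀ i ≤ N, ∀ j ≤ M, F₁ (x i) (y j) = z i j ∧ F₂ (x i) (y j) = t i j) ∧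
  ∀ n m, 1 ≤ n → n ≤ N → 1 ≤ m → m ≤ M →
    ∀ X ∈ Icc (x 0) (x N), ∀ Y ∈ Icc (y 0) (y M),
      F₁ (phiMap N x n X) (phiMap M y m Y)
        = a n m * F₁ X Y + b n m * F₂ X Y + pMap N M x y z t a b n m X Y ∧
      F₂ (phiMap N x n X) (phiMap M y m Y)
        = c n m * F₂ X Y + qMap N M x y t c n m X Y

/-- The invariance-of-ratio condition between the knots `x, y` and the knots `xs, ys`. -/
def RatioInv (N M : ℕ) (x y xs ys : ℕ → ℝ) : Prop :=
  (∀ n, 1 ≤ n → n ≤ N → (x 0 - x N) / (xs 0 - xs N) = (x (n-1) - x n) / (xs (n-1) - xs n)) ∧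
  (∀ m, 1 ≤ m → m ≤ M → (y 0 - y M) / (ys 0 - ys M) = (y (m-1) - y m) / (ys (m-1) - ys m))

/-- `T : [x₀, x_N] → [xs₀, xs_N]` is the cell-wise affine transfer map, sending
`[x_{n-1}, x_n]` affinely onto `[xs_{n-1}, xs_n]` (one coordinate of `R` resp. `K`). -/
def IsTransfer (N : ℕ) (x xs : ℕ → ℝ) (T : ℝ → ℝ) : Prop :=
  ∀ n, 1 ≤ n → n ≤ N → ∀ X ∈ Icc (x (n-1)) (x n),
    T X = xs (n-1) + (xs n - xs (n-1)) * (X - x (n-1)) / (x n - x (n-1))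

/-- `max { |a n m| : 1 ≤ n ≤ N, 1 ≤ m ≤ M }` (as an `sSup`). -/
def supParam (N M : ℕ) (a : ℕ → ℕ → ℝ) : ℝ :=
  sSup {v : ℝ | ∃ n m, 1 ≤ n ∧ n ≤ N ∧ 1 ≤ m ∧ m ≤ M ∧ v = |a n m|}

/-- `max { (|x_n - xs_n| + |y_m - ys_m|)^δ : 0 ≤ n ≤ N, 0 ≤ m ≤ M }` (as an `sSup`). -/
def supKnotDiff (N M : ℕ) (x xs y ys : ℕ → ℝ) (d : ℝ) : ℝ :=
  sSup {v : ℝ | ∃ n m, n ≤ N ∧ m ≤ M ∧ v = (|x n - xs n| + |y m - ys m|) ^ d}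

/-- `max { |z_{n,m} - zs_{n,m}| : 0 ≤ n ≤ N, 0 ≤ m ≤ M }` (as an `sSup`). -/
def supValDiff (N M : ℕ) (z zs : ℕ → ℕ → ℝ) : ℝ :=
  sSup {v : ℝ | ∃ n m, n ≤ N ∧ m ≤ M ∧ v = |z n m - zs n m|}

/-- `max { |z_{i,j} - z_{k,l}| : 0 ≤ i,j,k,l ≤ N }` (as an `sSup`). -/
def supPairDiff (N : ℕ) (z : ℕ → ℕ → ℝ) : ℝ :=
  sSup {v : ℝ | ∃ i j k l, i ≤ N ∧ j ≤ N ∧ k ≤ N ∧ l ≤ N ∧ v = |z i j - z k l|}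

/-!
Two CHFIS pairs with the same knots and parameters are compared through their self-affinity
equations: at `(φ_n U, ψ_m V)` their difference is `α_{n,m}`, `β_{n,m}`, `γ_{n,m}` times the
differences at `(U, V)` plus the difference of the maps `p` (or `q`). These are bilinear, so on a
rectangle they are bounded by their values at the corners, which the join-up conditions express
through the data. Every point of `S` is some `(φ_n U, ψ_m V)`, so the supremum `s` of a difference
satisfies `s ≤ α s + ρ`. This bounds `F₁ - Q₁`, where `(Q₁, Q₂)` is the pair of `Δ*₂`, and gives
uniqueness of CHFIS pairs. Invariance of ratios makes the affine map `S* → S` carry the knots of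
`Δ*` to those of `Δ` and commute with the maps `φ_n`, `ψ_m`, so `Q` composed with it is the CHFIS
pair of `Δ*`, that is `G`. That map moves each point by at most the distance between
corresponding knots, so the Hölder bound on `Q₁` controls `Q₁ - G₁`.
-/

theorem abs_affine_le {m k u v X C : ℝ} (hX : X ∈ Icc u v) (hu : |m * u + k| ≤ C)
    (hv : |m * v + k| ≤ C) : |m * X + k| ≤ C := by
  rw [abs_le] at *
  rcases le_total 0 m with hm | hm <;> constructor <;> nlinarith [hX.1, hX.2]

def IsBiaffine (B : ℝ → ℝ → ℝ) : Prop :=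
  ∃ e f g k : ℝ, ∀ X Y, B X Y = e * X + f * Y + g * X * Y + k

namespace IsBiaffine

variable {B B' : ℝ → ℝ → ℝ}

theorem sub (hB : IsBiaffine B) (hB' : IsBiaffine B') : IsBiaffine fun X Y => B X Y - B' X Y := by
  obtain ⟨e, f, g, k, hB⟩ := hB
  obtain ⟨e', f', g', k', hB'⟩ := hB'
  exact ⟨e - e', f - f', g - g', k - k', fun X Y => by simp only [hB, hB']; ring⟩

theorem comp_affine (hB : IsBiaffine B) (u l v u' l' v' : ℝ) :
    IsBiaffine fun X Y => B (u + l * (X - v)) (u' + l' * (Y - v')) := by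
  obtain ⟨e, f, g, k, hB⟩ := hB
  refine ⟨e * l + g * l * (u' - l' * v'), f * l' + g * l' * (u - l * v), g * l * l',
    e * (u - l * v) + f * (u' - l' * v') + g * (u - l * v) * (u' - l' * v') + k,
    fun X Y => by simp only [hB]; ring⟩

theorem abs_le_of_corners (hB : IsBiaffine B) {u v w s X Y C : ℝ} (hX : X ∈ Icc u v)
    (hY : Y ∈ Icc w s) (huw : |B u w| ≤ C) (hus : |B u s| ≤ C) (hvw : |B v w| ≤ C)
    (hvs : |B v s| ≤ C) : |B X Y| ≤ C := by
  obtain ⟨e, f, g, k, hB⟩ := hB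
  rw [hB] at huw hus hvw hvs ⊢
  have side : ∀ r, |e * r + f * w + g * r * w + k| ≤ C → |e * r + f * s + g * r * s + k| ≤ C →
      |e * r + f * Y + g * r * Y + k| ≤ C := fun r hw hs => by
    convert abs_affine_le (m := f + g * r) (k := e * r + k) hY
      (by convert hw using 2; ring) (by convert hs using 2; ring) using 2
    ring
  convert abs_affine_le (m := e + g * Y) (k := f * Y + k) hX
    (by convert side u huw hus using 2; ring) (by convert side v hvw hvs using 2; ring) using 2
  ring

end IsBiaffine

theorem le_div_one_sub_of_forall_exists_le {α : Type*} {s : Set α} {g : α → ℝ}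
    (hg : BddAbove (g '' s)) {γ ρ : ℝ} (hγ0 : 0 ≤ γ) (hγ1 : γ < 1)
    (h : ∀ p ∈ s, ∃ q ∈ s, g p ≤ γ * g q + ρ) {p : α} (hp : p ∈ s) : g p ≤ ρ / (1 - γ) := by
  have hle : ∀ q ∈ s, g q ≤ sSup (g '' s) := fun q hq => le_csSup hg (mem_image_of_mem g hq)
  have hsup : sSup (g '' s) ≤ γ * sSup (g '' s) + ρ := by
    refine csSup_le ⟨g p, mem_image_of_mem g hp⟩ ?_
    rintro _ ⟨q, hq, rfl⟩
    obtain ⟨r, hr, hqr⟩ := h q hq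
    nlinarith [hle r hr]
  rw [le_div_iff₀ (sub_pos.2 hγ1)]
  nlinarith [hle p hp]

section Knots

variable {N : ℕ} {x : ℕ → ℝ}

theorem knots_strictMonoOn (hx : ∀ i < N, x i < x (i + 1)) : StrictMonoOn x (Iic N) :=
  strictMonoOn_Iic_of_lt_succ fun i hi => by simpa [Order.succ_eq_add_one] using hx i hi

theorem knots_zero_lt_last (hN : 1 ≤ N) (hx : ∀ i < N, x i < x (i + 1)) : x 0 < x N :=
  knots_strictMonoOn hx (by simp) (by simp) (by omega)

theorem exists_knot_cell (hN : 1 ≤ N) (hx : ∀ i < N, x i < x (i + 1)) {X : ℝ}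
    (hX : X ∈ Icc (x 0) (x N)) : ∃ n, 1 ≤ n ∧ n ≤ N ∧ X ∈ Icc (x (n - 1)) (x n) := by
  induction N with
  | zero => omega
  | succ k ih =>
    rcases Nat.eq_zero_or_pos k with rfl | hk
    · exact ⟨1, le_rfl, le_rfl, hX⟩
    rcases le_total X (x k) with h | h
    · obtain ⟨n, hn1, hnk, hXn⟩ := ih hk (fun i hi => hx i (by omega)) ⟨hX.1, h⟩
      exact ⟨n, hn1, by omega, hXn⟩
    · exact ⟨k + 1, by omega, le_rfl, h, hX.2⟩

theorem exists_phiMap_eq (hN : 1 ≤ N) (hx : ∀ i < N, x i < x (i + 1)) {X : ℝ}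
    (hX : X ∈ Icc (x 0) (x N)) :
    ∃ n, 1 ≤ n ∧ n ≤ N ∧ ∃ U ∈ Icc (x 0) (x N), phiMap N x n U = X := by
  obtain ⟨n, hn1, hnN, hXn⟩ := exists_knot_cell hN hx hX
  have hmono := knots_strictMonoOn hx
  have hcell : 0 < x n - x (n - 1) :=
    sub_pos.2 (hmono (by simp; omega) (by simpa using hnN) (by omega))
  have hwhole : 0 < x N - x 0 := sub_pos.2 (knots_zero_lt_last hN hx)
  have hθ : (X - x (n - 1)) / (x n - x (n - 1)) ∈ Icc (0 : ℝ) 1 :=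
    ⟨div_nonneg (by linarith [hXn.1]) hcell.le, (div_le_one hcell).2 (by linarith [hXn.2])⟩
  refine ⟨n, hn1, hnN, x 0 + (X - x (n - 1)) / (x n - x (n - 1)) * (x N - x 0), ⟨?_, ?_⟩, ?_⟩
  · nlinarith [hθ.1]
  · nlinarith [hθ.2]
  · unfold phiMap
    field_simp
    ring

end Knots

def transferMap (N : ℕ) (x xs : ℕ → ℝ) (X : ℝ) : ℝ :=
  x 0 + (x N - x 0) / (xs N - xs 0) * (X - xs 0)

section Transfer

variable {N : ℕ} {x xs : ℕ → ℝ} {X : ℝ}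

theorem transferMap_zero : transferMap N x xs (xs 0) = x 0 := by
  simp [transferMap]

theorem transferMap_last (hxs : xs 0 ≠ xs N) : transferMap N x xs (xs N) = x N := by
  rw [transferMap, div_mul_cancel₀ _ (sub_ne_zero.2 hxs.symm)]
  ring

theorem transferMap_knot (hxs : ∀ i < N, xs i < xs (i + 1))
    (hratio : ∀ n, 1 ≤ n → n ≤ N →
      (x 0 - x N) / (xs 0 - xs N) = (x (n - 1) - x n) / (xs (n - 1) - xs n)) :
    ∀ n ≤ N, transferMap N x xs (xs n) = x n := by
  have hslope : (x N - x 0) / (xs N - xs 0) = (x 0 - x N) / (xs 0 - xs N) := by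
    rw [← neg_sub (x 0), ← neg_sub (xs 0), neg_div_neg_eq]
  intro n hn
  induction n with
  | zero => exact transferMap_zero
  | succ k ih =>
    have hcell := hratio (k + 1) (by omega) hn
    rw [Nat.add_sub_cancel, eq_div_iff (sub_ne_zero.2 (hxs k (by omega)).ne)] at hcell
    have hk := ih (by omega)
    rw [transferMap, hslope] at hk ⊢
    linear_combination hk - hcell

theorem transferMap_phiMap {n : ℕ} (hx : x 0 ≠ x N) (hxs : xs 0 ≠ xs N)
    (hprev : transferMap N x xs (xs (n - 1)) = x (n - 1))
    (hnext : transferMap N x xs (xs n) = x n) (U : ℝ) :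
    transferMap N x xs (phiMap N xs n U) = phiMap N x n (transferMap N x xs U) := by
  have hx' := sub_ne_zero.2 hx.symm
  have hxs' := sub_ne_zero.2 hxs.symm
  unfold phiMap
  rw [← hprev, ← hnext]
  unfold transferMap
  field_simp
  ring

theorem transferMap_mem (hx : x 0 ≤ x N) (hxs : xs 0 < xs N) (hX : X ∈ Icc (xs 0) (xs N)) :
    transferMap N x xs X ∈ Icc (x 0) (x N) := by
  have hslope : 0 ≤ (x N - x 0) / (xs N - xs 0) := div_nonneg (by linarith) (by linarith)
  have hle : (x N - x 0) / (xs N - xs 0) * (X - xs 0) ≤ x N - x 0 := by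
    calc _ ≤ (x N - x 0) / (xs N - xs 0) * (xs N - xs 0) := by gcongr; exact hX.2
      _ = x N - x 0 := div_mul_cancel₀ _ (by linarith)
  constructor <;> unfold transferMap <;> nlinarith [hX.1]

theorem abs_sub_transferMap_le (hxs : xs 0 < xs N) (hX : X ∈ Icc (xs 0) (xs N)) :
    |X - transferMap N x xs X| ≤ max |x 0 - xs 0| |x N - xs N| := by
  set l := (x N - x 0) / (xs N - xs 0)
  have haff : ∀ X, X - transferMap N x xs X = (1 - l) * X + (l * xs 0 - x 0) := fun X => by
    unfold transferMap; ring
  rw [haff]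
  apply abs_affine_le hX
  · rw [← haff, transferMap_zero, abs_sub_comm]
    exact le_max_left _ _
  · rw [← haff, transferMap_last hxs.ne, abs_sub_comm]
    exact le_max_right _ _

theorem exists_abs_sub_transferMap_le (hxs : xs 0 < xs N) (hX : X ∈ Icc (xs 0) (xs N)) :
    ∃ i ≤ N, |X - transferMap N x xs X| ≤ |x i - xs i| := by
  rcases max_choice |x 0 - xs 0| |x N - xs N| with h | h
  · exact ⟨0, Nat.zero_le N, h ▸ abs_sub_transferMap_le hxs hX⟩
  · exact ⟨N, le_rfl, h ▸ abs_sub_transferMap_le hxs hX⟩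

theorem continuous_transferMap : Continuous (transferMap N x xs) := by
  unfold transferMap
  fun_prop

end Transfer

theorem IsBiaffine.comp_transferMap {B : ℝ → ℝ → ℝ} (hB : IsBiaffine B) (N M : ℕ)
    (x xs y ys : ℕ → ℝ) :
    IsBiaffine fun X Y => B (transferMap N x xs X) (transferMap M y ys Y) :=
  hB.comp_affine _ _ _ _ _ _

section JoinUp

variable {N M : ℕ} {x y : ℕ → ℝ} {z t : ℕ → ℕ → ℝ} {a b : ℕ → ℕ → ℝ} {n m : ℕ}

theorem isBiaffine_pMap : IsBiaffine (pMap N M x y z t a b n m) :=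
  ⟨_, _, _, _, fun _ _ => rfl⟩

variable (hx : x 0 ≠ x N) (hy : y 0 ≠ y M)
include hx hy

theorem pMap_zero_zero :
    pMap N M x y z t a b n m (x 0) (y 0) = z (n - 1) (m - 1) - a n m * z 0 0 - b n m * t 0 0 := by
  have := sub_ne_zero.2 hx; have := sub_ne_zero.2 hy
  unfold pMap kCoef eCoef fCoef gCoef eva
  field_simp
  ring

theorem pMap_last_zero :
    pMap N M x y z t a b n m (x N) (y 0) = z n (m - 1) - a n m * z N 0 - b n m * t N 0 := by
  have := sub_ne_zero.2 hx; have := sub_ne_zero.2 hy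
  unfold pMap kCoef eCoef fCoef gCoef eva
  field_simp
  ring

theorem pMap_zero_last :
    pMap N M x y z t a b n m (x 0) (y M) = z (n - 1) m - a n m * z 0 M - b n m * t 0 M := by
  have := sub_ne_zero.2 hx; have := sub_ne_zero.2 hy
  unfold pMap kCoef eCoef fCoef gCoef eva
  field_simp
  ring

theorem pMap_last_last :
    pMap N M x y z t a b n m (x N) (y M) = z n m - a n m * z N M - b n m * t N M := by
  have := sub_ne_zero.2 hx; have := sub_ne_zero.2 hy
  unfold pMap kCoef eCoef fCoef gCoef eva
  field_simp
  ring

theorem abs_pMap_sub_pMap_le {z' t' : ℕ → ℕ → ℝ} {α β sz st X Y : ℝ} (hn : n ≤ N) (hm : m ≤ M)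
    (hα : |a n m| ≤ α) (hβ : |b n m| ≤ β) (hz : ∀ i ≤ N, ∀ j ≤ M, |z i j - z' i j| ≤ sz)
    (ht : ∀ i ≤ N, ∀ j ≤ M, |t i j - t' i j| ≤ st)
    (hX : X ∈ Icc (x 0) (x N)) (hY : Y ∈ Icc (y 0) (y M)) :
    |pMap N M x y z t a b n m X Y - pMap N M x y z' t' a b n m X Y| ≤ (1 + α) * sz + β * st := by
  have corner : ∀ i ≤ N, ∀ j ≤ M, ∀ k ≤ N, ∀ l ≤ M,
      |(z i j - a n m * z k l - b n m * t k l) - (z' i j - a n m * z' k l - b n m * t' k l)|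
        ≤ (1 + α) * sz + β * st := by
    intro i hi j hj k hk l hl
    have hzkl := hz k hk l hl
    have hakl : |a n m * (z k l - z' k l)| ≤ α * sz := by
      rw [abs_mul]; exact mul_le_mul hα hzkl (abs_nonneg _) ((abs_nonneg _).trans hα)
    have hbkl : |b n m * (t k l - t' k l)| ≤ β * st := by
      rw [abs_mul]; exact mul_le_mul hβ (ht k hk l hl) (abs_nonneg _) ((abs_nonneg _).trans hβ)
    calc _ = |(z i j - z' i j) - a n m * (z k l - z' k l) - b n m * (t k l - t' k l)| := by
          ring_nf
      _ ≤ |z i j - z' i j| + |a n m * (z k l - z' k l)| + |b n m * (t k l - t' k l)| :=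
          (abs_sub _ _).trans (add_le_add_left (abs_sub _ _) _)
      _ ≤ (1 + α) * sz + β * st := by linarith [hz i hi j hj]
  apply (isBiaffine_pMap.sub isBiaffine_pMap).abs_le_of_corners hX hY <;>
    simp only [pMap_zero_zero hx hy, pMap_last_zero hx hy, pMap_zero_last hx hy,
      pMap_last_last hx hy] <;>
    exact corner _ (by omega) _ (by omega) _ (by omega) _ (by omega)

theorem pMap_transferMap {xs ys : ℕ → ℝ} (hxs : xs 0 ≠ xs N) (hys : ys 0 ≠ ys M) {U V : ℝ}
    (hU : U ∈ Icc (xs 0) (xs N)) (hV : V ∈ Icc (ys 0) (ys M)) :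
    pMap N M x y z t a b n m (transferMap N x xs U) (transferMap M y ys V)
      = pMap N M xs ys z t a b n m U V := by
  have hB : IsBiaffine fun U V => pMap N M x y z t a b n m (transferMap N x xs U)
      (transferMap M y ys V) - pMap N M xs ys z t a b n m U V :=
    (isBiaffine_pMap.comp_transferMap N M x xs y ys).sub isBiaffine_pMap
  refine sub_eq_zero.1 (abs_nonpos_iff.1 (hB.abs_le_of_corners hU hV ?_ ?_ ?_ ?_)) <;>
    simp only [transferMap_zero, transferMap_last hxs, transferMap_last hys,
      pMap_zero_zero hx hy, pMap_last_zero hx hy, pMap_zero_last hx hy, pMap_last_last hx hy,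
      pMap_zero_zero hxs hys, pMap_last_zero hxs hys, pMap_zero_last hxs hys,
      pMap_last_last hxs hys, sub_self, abs_zero, le_refl]

end JoinUp

section Suprema

variable {N M : ℕ}

theorem finite_setOf_exists_le (f : ℕ → ℕ → ℝ) :
    {v : ℝ | ∃ n m, n ≤ N ∧ m ≤ M ∧ v = f n m}.Finite := by
  refine (((finite_Iic N).prod (finite_Iic M)).image fun p : ℕ × ℕ => f p.1 p.2).subset ?_
  rintro v ⟨n, m, hn, hm, rfl⟩
  exact ⟨(n, m), ⟨hn, hm⟩, rfl⟩

theorem finite_setOf_abs_param (a : ℕ → ℕ → ℝ) :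
    {v : ℝ | ∃ n m, 1 ≤ n ∧ n ≤ N ∧ 1 ≤ m ∧ m ≤ M ∧ v = |a n m|}.Finite := by
  refine (finite_setOf_exists_le (N := N) (M := M) fun n m => |a n m|).subset ?_
  rintro v ⟨n, m, -, hn, -, hm, rfl⟩
  exact ⟨n, m, hn, hm, rfl⟩

theorem le_supParam {a : ℕ → ℕ → ℝ} {n m : ℕ} (hn1 : 1 ≤ n) (hnN : n ≤ N) (hm1 : 1 ≤ m)
    (hmM : m ≤ M) : |a n m| ≤ supParam N M a :=
  le_csSup (finite_setOf_abs_param a).bddAbove ⟨n, m, hn1, hnN, hm1, hmM, rfl⟩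

theorem supParam_nonneg {a : ℕ → ℕ → ℝ} (hN : 1 ≤ N) (hM : 1 ≤ M) : 0 ≤ supParam N M a :=
  (abs_nonneg _).trans (le_supParam le_rfl hN le_rfl hM)

theorem supParam_lt_one {a : ℕ → ℕ → ℝ} (hN : 1 ≤ N) (hM : 1 ≤ M)
    (ha : ∀ n m, 1 ≤ n → n ≤ N → 1 ≤ m → m ≤ M → |a n m| < 1) : supParam N M a < 1 := by
  refine ((finite_setOf_abs_param a).csSup_lt_iff ⟨_, 1, 1, le_rfl, hN, le_rfl, hM, rfl⟩).2 ?_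
  rintro _ ⟨n, m, hn1, hnN, hm1, hmM, rfl⟩
  exact ha n m hn1 hnN hm1 hmM

theorem le_supValDiff {z zs : ℕ → ℕ → ℝ} {n m : ℕ} (hn : n ≤ N) (hm : m ≤ M) :
    |z n m - zs n m| ≤ supValDiff N M z zs :=
  le_csSup (finite_setOf_exists_le fun n m => |z n m - zs n m|).bddAbove ⟨n, m, hn, hm, rfl⟩

theorem supValDiff_nonneg (z zs : ℕ → ℕ → ℝ) : 0 ≤ supValDiff N M z zs :=
  (abs_nonneg _).trans (le_supValDiff (Nat.zero_le N) (Nat.zero_le M))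

theorem supValDiff_self (z : ℕ → ℕ → ℝ) : supValDiff N M z z = 0 := by
  refine le_antisymm (csSup_le ⟨0, 0, 0, Nat.zero_le N, Nat.zero_le M, by simp⟩ ?_)
    (supValDiff_nonneg z z)
  rintro v ⟨n, m, -, -, rfl⟩
  simp

theorem le_supKnotDiff {x xs y ys : ℕ → ℝ} {d : ℝ} {n m : ℕ} (hn : n ≤ N) (hm : m ≤ M) :
    (|x n - xs n| + |y m - ys m|) ^ d ≤ supKnotDiff N M x xs y ys d :=
  le_csSup (finite_setOf_exists_le fun n m => (|x n - xs n| + |y m - ys m|) ^ d).bddAbove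
    ⟨n, m, hn, hm, rfl⟩

theorem supKnotDiff_nonneg (x xs y ys : ℕ → ℝ) (d : ℝ) : 0 ≤ supKnotDiff N M x xs y ys d :=
  (rpow_nonneg (by positivity) d).trans (le_supKnotDiff (Nat.zero_le N) (Nat.zero_le M))

theorem rpow_abs_sub_transferMap_le_supKnotDiff {x xs y ys : ℕ → ℝ} {δ X Y : ℝ} (hδ : 0 ≤ δ)
    (hxs : xs 0 < xs N) (hys : ys 0 < ys M) (hX : X ∈ Icc (xs 0) (xs N))
    (hY : Y ∈ Icc (ys 0) (ys M)) :
    (|X - transferMap N x xs X| + |Y - transferMap M y ys Y|) ^ δ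
      ≤ supKnotDiff N M x xs y ys δ := by
  obtain ⟨i, hi, hXi⟩ := exists_abs_sub_transferMap_le (x := x) hxs hX
  obtain ⟨j, hj, hYj⟩ := exists_abs_sub_transferMap_le (x := y) hys hY
  exact (rpow_le_rpow (by positivity) (add_le_add hXi hYj) hδ).trans (le_supKnotDiff hi hj)

end Suprema

section CHFIS

variable {N M : ℕ} {x y : ℕ → ℝ} {a b c : ℕ → ℕ → ℝ}

theorem DataOK.x_zero_lt_last (hD : DataOK N M x y a b c) : x 0 < x N :=
  knots_zero_lt_last hD.hN hD.hx

theorem DataOK.y_zero_lt_last (hD : DataOK N M x y a b c) : y 0 < y M :=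
  knots_zero_lt_last hD.hM hD.hy

theorem DataOK.supParam_a_lt_one (hD : DataOK N M x y a b c) : supParam N M a < 1 :=
  supParam_lt_one hD.hN hD.hM hD.ha

theorem DataOK.supParam_c_lt_one (hD : DataOK N M x y a b c) : supParam N M c < 1 :=
  supParam_lt_one hD.hN hD.hM fun n m hn1 hnN hm1 hmM =>
    (le_add_of_nonneg_left (abs_nonneg _)).trans_lt (hD.hbc n m hn1 hnN hm1 hmM)

theorem abs_le_of_abs_comp_phiMap_le (hN : 1 ≤ N) (hM : 1 ≤ M) (hx : ∀ i < N, x i < x (i + 1))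
    (hy : ∀ j < M, y j < y (j + 1)) {D : ℝ → ℝ → ℝ}
    (hD : ContinuousOn (fun P : ℝ × ℝ => D P.1 P.2) (Icc (x 0) (x N) ×ˢ Icc (y 0) (y M)))
    {γ ρ : ℝ} (hγ0 : 0 ≤ γ) (hγ1 : γ < 1)
    (hstep : ∀ n m, 1 ≤ n → n ≤ N → 1 ≤ m → m ≤ M → ∀ U ∈ Icc (x 0) (x N),
      ∀ V ∈ Icc (y 0) (y M), |D (phiMap N x n U) (phiMap M y m V)| ≤ γ * |D U V| + ρ) :
    ∀ X ∈ Icc (x 0) (x N), ∀ Y ∈ Icc (y 0) (y M), |D X Y| ≤ ρ / (1 - γ) := by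
  intro X hX Y hY
  refine le_div_one_sub_of_forall_exists_le (g := fun P : ℝ × ℝ => |D P.1 P.2|)
    ((isCompact_Icc.prod isCompact_Icc).image_of_continuousOn hD.abs).bddAbove hγ0 hγ1 ?_
    (mk_mem_prod hX hY)
  rintro ⟨X, Y⟩ ⟨hX, hY⟩
  obtain ⟨n, hn1, hnN, U, hU, rfl⟩ := exists_phiMap_eq hN hx hX
  obtain ⟨m, hm1, hmM, V, hV, rfl⟩ := exists_phiMap_eq hM hy hY
  exact ⟨(U, V), ⟨hU, hV⟩, hstep n m hn1 hnN hm1 hmM U hU V hV⟩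

variable {z t z' t' : ℕ → ℕ → ℝ} {F₁ F₂ G₁ G₂ : ℝ → ℝ → ℝ}

theorem IsCHFIS.abs_sub_snd_le (hD : DataOK N M x y a b c) (hF : IsCHFIS N M x y z t a b c F₁ F₂)
    (hG : IsCHFIS N M x y z' t' a b c G₁ G₂) :
    ∀ X ∈ Icc (x 0) (x N), ∀ Y ∈ Icc (y 0) (y M),
      |F₂ X Y - G₂ X Y| ≤ (1 + supParam N M c) * supValDiff N M t t' / (1 - supParam N M c) := by
  refine abs_le_of_abs_comp_phiMap_le hD.hN hD.hM hD.hx hD.hy (D := fun X Y => F₂ X Y - G₂ X Y)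
    (hF.2.1.sub hG.2.1) (supParam_nonneg hD.hN hD.hM) hD.supParam_c_lt_one ?_
  intro n m hn1 hnN hm1 hmM U hU V hV
  have hc := le_supParam (a := c) hn1 hnN hm1 hmM
  have hq : |qMap N M x y t c n m U V - qMap N M x y t' c n m U V|
      ≤ (1 + supParam N M c) * supValDiff N M t t' + 0 * supValDiff N M t t' :=
    abs_pMap_sub_pMap_le hD.x_zero_lt_last.ne hD.y_zero_lt_last.ne hnN hmM hc (by simp)
      (fun i hi j hj => le_supValDiff hi hj) (fun i hi j hj => le_supValDiff hi hj) hU hV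
  rw [(hF.2.2.2 n m hn1 hnN hm1 hmM U hU V hV).2, (hG.2.2.2 n m hn1 hnN hm1 hmM U hU V hV).2]
  calc _ = |c n m * (F₂ U V - G₂ U V) + (qMap N M x y t c n m U V - qMap N M x y t' c n m U V)| := by
        ring_nf
    _ ≤ |c n m| * |F₂ U V - G₂ U V| + |qMap N M x y t c n m U V - qMap N M x y t' c n m U V| := by
        rw [← abs_mul]; exact abs_add_le _ _
    _ ≤ _ := by
        have := mul_le_mul_of_nonneg_right hc (abs_nonneg (F₂ U V - G₂ U V))
        linarith

theorem IsCHFIS.abs_sub_fst_le (hD : DataOK N M x y a b c) (hF : IsCHFIS N M x y z t a b c F₁ F₂)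
    (hG : IsCHFIS N M x y z' t' a b c G₁ G₂) :
    ∀ X ∈ Icc (x 0) (x N), ∀ Y ∈ Icc (y 0) (y M),
      |F₁ X Y - G₁ X Y| ≤ ((1 + supParam N M a) * supValDiff N M z z'
        + 2 * supParam N M b * supValDiff N M t t' / (1 - supParam N M c))
          / (1 - supParam N M a) := by
  set α := supParam N M a
  set β := supParam N M b
  set γ := supParam N M c
  set sz := supValDiff N M z z'
  set st := supValDiff N M t t'
  refine abs_le_of_abs_comp_phiMap_le hD.hN hD.hM hD.hx hD.hy (D := fun X Y => F₁ X Y - G₁ X Y)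
    (hF.1.sub hG.1) (supParam_nonneg hD.hN hD.hM) hD.supParam_a_lt_one ?_
  intro n m hn1 hnN hm1 hmM U hU V hV
  have ha : |a n m| ≤ α := le_supParam hn1 hnN hm1 hmM
  have hb : |b n m| ≤ β := le_supParam hn1 hnN hm1 hmM
  have hp : |pMap N M x y z t a b n m U V - pMap N M x y z' t' a b n m U V| ≤ (1 + α) * sz + β * st :=
    abs_pMap_sub_pMap_le hD.x_zero_lt_last.ne hD.y_zero_lt_last.ne hnN hmM ha hb
      (fun i hi j hj => le_supValDiff hi hj) (fun i hi j hj => le_supValDiff hi hj) hU hV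
  have hsnd : |b n m| * |F₂ U V - G₂ U V| ≤ β * ((1 + γ) * st / (1 - γ)) :=
    mul_le_mul hb (hF.abs_sub_snd_le hD hG U hU V hV) (abs_nonneg _) ((abs_nonneg _).trans hb)
  have hρ : β * ((1 + γ) * st / (1 - γ)) + β * st = 2 * β * st / (1 - γ) := by
    have hγ : 1 - γ ≠ 0 := (sub_pos.2 hD.supParam_c_lt_one).ne'
    field_simp
    ring
  rw [(hF.2.2.2 n m hn1 hnN hm1 hmM U hU V hV).1, (hG.2.2.2 n m hn1 hnN hm1 hmM U hU V hV).1]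
  calc _ = |a n m * (F₁ U V - G₁ U V) + b n m * (F₂ U V - G₂ U V)
          + (pMap N M x y z t a b n m U V - pMap N M x y z' t' a b n m U V)| := by
        ring_nf
    _ ≤ |a n m| * |F₁ U V - G₁ U V| + |b n m| * |F₂ U V - G₂ U V|
          + |pMap N M x y z t a b n m U V - pMap N M x y z' t' a b n m U V| := by
        rw [← abs_mul, ← abs_mul]
        exact (abs_add_le _ _).trans (add_le_add_left (abs_add_le _ _) _)
    _ ≤ _ := by
        have := mul_le_mul_of_nonneg_right ha (abs_nonneg (F₁ U V - G₁ U V))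
        linarith

theorem IsCHFIS.fst_eqOn (hD : DataOK N M x y a b c) (hF : IsCHFIS N M x y z t a b c F₁ F₂)
    (hG : IsCHFIS N M x y z t a b c G₁ G₂) :
    ∀ X ∈ Icc (x 0) (x N), ∀ Y ∈ Icc (y 0) (y M), F₁ X Y = G₁ X Y := by
  intro X hX Y hY
  have h := hF.abs_sub_fst_le hD hG X hX Y hY
  simp only [supValDiff_self, mul_zero, zero_div, add_zero] at h
  exact sub_eq_zero.1 (abs_nonpos_iff.1 h)

theorem IsCHFIS.comp_transferMap {xs ys : ℕ → ℝ} {Q₁ Q₂ : ℝ → ℝ → ℝ} (hN : 1 ≤ N) (hM : 1 ≤ M)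
    (hx : ∀ i < N, x i < x (i + 1)) (hy : ∀ j < M, y j < y (j + 1))
    (hxs : ∀ i < N, xs i < xs (i + 1)) (hys : ∀ j < M, ys j < ys (j + 1))
    (hratio : RatioInv N M x y xs ys) (hQ : IsCHFIS N M x y z t a b c Q₁ Q₂) :
    IsCHFIS N M xs ys z t a b c
      (fun X Y => Q₁ (transferMap N x xs X) (transferMap M y ys Y))
      (fun X Y => Q₂ (transferMap N x xs X) (transferMap M y ys Y)) := by
  have hx0 := knots_zero_lt_last hN hx
  have hy0 := knots_zero_lt_last hM hy
  have hxs0 := knots_zero_lt_last hN hxs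
  have hys0 := knots_zero_lt_last hM hys
  have hkx := transferMap_knot hxs hratio.1
  have hky := transferMap_knot hys hratio.2
  have hmaps : MapsTo (fun P : ℝ × ℝ => (transferMap N x xs P.1, transferMap M y ys P.2))
      (Icc (xs 0) (xs N) ×ˢ Icc (ys 0) (ys M)) (Icc (x 0) (x N) ×ˢ Icc (y 0) (y M)) :=
    fun P hP => ⟨transferMap_mem hx0.le hxs0 hP.1, transferMap_mem hy0.le hys0 hP.2⟩
  have hcont : ContinuousOn (fun P : ℝ × ℝ => (transferMap N x xs P.1, transferMap M y ys P.2))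
      (Icc (xs 0) (xs N) ×ˢ Icc (ys 0) (ys M)) :=
    ((continuous_transferMap.comp continuous_fst).prodMk
      (continuous_transferMap.comp continuous_snd)).continuousOn
  refine ⟨hQ.1.comp hcont hmaps, hQ.2.1.comp hcont hmaps, fun i hi j hj => ?_,
    fun n m hn1 hnN hm1 hmM U hU V hV => ?_⟩
  · simpa only [hkx i hi, hky j hj] using hQ.2.2.1 i hi j hj
  · have hL := hmaps (mk_mem_prod hU hV)
    dsimp only
    rw [transferMap_phiMap hx0.ne hxs0.ne (hkx (n - 1) (by omega)) (hkx n hnN),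
      transferMap_phiMap hy0.ne hys0.ne (hky (m - 1) (by omega)) (hky m hmM),
      (hQ.2.2.2 n m hn1 hnN hm1 hmM _ hL.1 _ hL.2).1, (hQ.2.2.2 n m hn1 hnN hm1 hmM _ hL.1 _ hL.2).2,
      qMap, qMap, pMap_transferMap hx0.ne hy0.ne hxs0.ne hys0.ne hU hV,
      pMap_transferMap hx0.ne hy0.ne hxs0.ne hys0.ne hU hV]
    exact ⟨rfl, rfl⟩

end CHFIS

theorem stability_constants_le {α β γ sz st K : ℝ} (hα0 : 0 ≤ α) (hα1 : α < 1) (hβ : 0 ≤ β)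
    (hγ0 : 0 ≤ γ) (hγ1 : γ < 1) (hsz : 0 ≤ sz) (hst : 0 ≤ st) (hK : 0 ≤ K) :
    ((1 + α) * sz + 2 * β * st / (1 - γ)) / (1 - α) + K
      ≤ 8 * β / ((1 - α) * (1 - γ)) * st + 4 * (1 + α) / (1 - α) * sz
        + (2 * β * γ / ((1 - α) * (1 - γ)) + (1 + α) / (1 - α)) * K := by
  have hα' : 0 < 1 - α := sub_pos.2 hα1
  have hγ' : 0 < 1 - γ := sub_pos.2 hγ1
  have hsplit : ((1 + α) * sz + 2 * β * st / (1 - γ)) / (1 - α)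
      = 2 * β / ((1 - α) * (1 - γ)) * st + (1 + α) / (1 - α) * sz := by
    field_simp
    ring
  have hst' : 2 * β / ((1 - α) * (1 - γ)) * st ≤ 8 * β / ((1 - α) * (1 - γ)) * st := by
    gcongr; linarith
  have hsz' : (1 + α) / (1 - α) * sz ≤ 4 * (1 + α) / (1 - α) * sz := by
    rw [mul_div_assoc]; gcongr; nlinarith [div_nonneg (by linarith : 0 ≤ 1 + α) hα'.le]
  have hK' : K ≤ (2 * β * γ / ((1 - α) * (1 - γ)) + (1 + α) / (1 - α)) * K := by
    refine le_mul_of_one_le_left hK ?_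
    have : 1 ≤ (1 + α) / (1 - α) := (one_le_div hα').2 (by linarith)
    have : 0 ≤ 2 * β * γ / ((1 - α) * (1 - γ)) := by positivity
    linarith
  linarith

theorem chfis_stability_main_general (N M : ℕ) (x y xs ys : ℕ → ℝ) (z zs t ts : ℕ → ℕ → ℝ)
    (a b c : ℕ → ℕ → ℝ)
    (hD : DataOK N M x y a b c) (hDs : DataOK N M xs ys a b c)
    (hratio : RatioInv N M x y xs ys)
    (hsub : Icc (xs 0) (xs N) ×ˢ Icc (ys 0) (ys M) ⊆ Icc (x 0) (x N) ×ˢ Icc (y 0) (y M))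
    (F₁ F₂ G₁ G₂ Q₁ Q₂ : ℝ → ℝ → ℝ)
    (hF : IsCHFIS N M x y z t a b c F₁ F₂)
    (hG : IsCHFIS N M xs ys zs ts a b c G₁ G₂)
    (hQ : IsCHFIS N M x y zs ts a b c Q₁ Q₂)
    (Mb δ : ℝ) (hMb : 0 ≤ Mb) (hδ : δ ∈ Set.Ioc (0:ℝ) 1)
    (hH1 : ∀ X ∈ Icc (x 0) (x N), ∀ Y ∈ Icc (y 0) (y M),
      ∀ X' ∈ Icc (x 0) (x N), ∀ Y' ∈ Icc (y 0) (y M),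
        |Q₁ X Y - Q₁ X' Y'| ≤ Mb * (|X - X'| + |Y - Y'|) ^ δ) :
    ∀ X ∈ Icc (xs 0) (xs N), ∀ Y ∈ Icc (ys 0) (ys M),
      |F₁ X Y - G₁ X Y| ≤
        8 * supParam N M b / ((1 - supParam N M a) * (1 - supParam N M c))
            * supValDiff N M t ts
        + 4 * (1 + supParam N M a) / (1 - supParam N M a) * supValDiff N M z zs
        + (2 * supParam N M b * supParam N M c
              / ((1 - supParam N M a) * (1 - supParam N M c))
            + (1 + supParam N M a) / (1 - supParam N M a))
          * Mb * supKnotDiff N M x xs y ys δ := by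
  intro X hX Y hY
  obtain ⟨hXS, hYS⟩ := mem_prod.1 (hsub (mk_mem_prod hX hY))
  have hQG : Q₁ (transferMap N x xs X) (transferMap M y ys Y) = G₁ X Y :=
    (hQ.comp_transferMap hD.hN hD.hM hD.hx hD.hy hDs.hx hDs.hy hratio).fst_eqOn hDs hG X hX Y hY
  have hQ₁G₁ : |Q₁ X Y - G₁ X Y| ≤ Mb * supKnotDiff N M x xs y ys δ := by
    rw [← hQG]
    refine (hH1 X hXS Y hYS _ (transferMap_mem hD.x_zero_lt_last.le hDs.x_zero_lt_last hX)
      _ (transferMap_mem hD.y_zero_lt_last.le hDs.y_zero_lt_last hY)).trans ?_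
    exact mul_le_mul_of_nonneg_left (rpow_abs_sub_transferMap_le_supKnotDiff hδ.1.le
      hDs.x_zero_lt_last hDs.y_zero_lt_last hX hY) hMb
  rw [mul_assoc _ Mb]
  refine le_trans ?_ (stability_constants_le (supParam_nonneg hD.hN hD.hM)
    hD.supParam_a_lt_one (supParam_nonneg hD.hN hD.hM) (supParam_nonneg hD.hN hD.hM)
    hD.supParam_c_lt_one (supValDiff_nonneg z zs) (supValDiff_nonneg t ts)
    (mul_nonneg hMb (supKnotDiff_nonneg x xs y ys δ)))
  linarith [abs_sub_le (F₁ X Y) (Q₁ X Y) (G₁ X Y), hF.abs_sub_fst_le hD hQ X hXS Y hYS]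

/-- the main stability theorem, `‖F₁ - G₁‖_∞ ≤ d(Δ, Δ*)` on `S*`, for a
simultaneous perturbation of all the variables. -/
theorem chfis_stability_main (N M : ℕ) (x y xs ys : ℕ → ℝ) (z zs t ts : ℕ → ℕ → ℝ)
    (a b c : ℕ → ℕ → ℝ)
    (hD : DataOK N M x y a b c) (hDs : DataOK N M xs ys a b c)
    (hratio : RatioInv N M x y xs ys)
    (hsub : Icc (xs 0) (xs N) ×ˢ Icc (ys 0) (ys M) ⊆ Icc (x 0) (x N) ×ˢ Icc (y 0) (y M))
    (F₁ F₂ G₁ G₂ P₁ P₂ Q₁ Q₂ : ℝ → ℝ → ℝ)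
    (hF : IsCHFIS N M x y z t a b c F₁ F₂)
    (hG : IsCHFIS N M xs ys zs ts a b c G₁ G₂)
    (hP : IsCHFIS N M x y z ts a b c P₁ P₂)
    (hQ : IsCHFIS N M x y zs ts a b c Q₁ Q₂)
    (Mb δ : ℝ) (hMb : 0 ≤ Mb) (hδ : δ ∈ Set.Ioc (0:ℝ) 1)
    (hH1 : ∀ X ∈ Icc (x 0) (x N), ∀ Y ∈ Icc (y 0) (y M),
      ∀ X' ∈ Icc (x 0) (x N), ∀ Y' ∈ Icc (y 0) (y M),
        |Q₁ X Y - Q₁ X' Y'| ≤ Mb * (|X - X'| + |Y - Y'|) ^ δ)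
    (hH2 : ∀ X ∈ Icc (x 0) (x N), ∀ Y ∈ Icc (y 0) (y M),
      ∀ X' ∈ Icc (x 0) (x N), ∀ Y' ∈ Icc (y 0) (y M),
        |Q₂ X Y - Q₂ X' Y'| ≤ Mb * (|X - X'| + |Y - Y'|) ^ δ) :
    ∀ X ∈ Icc (xs 0) (xs N), ∀ Y ∈ Icc (ys 0) (ys M),
      |F₁ X Y - G₁ X Y| ≤
        8 * supParam N M b / ((1 - supParam N M a) * (1 - supParam N M c))
            * supValDiff N M t ts
        + 4 * (1 + supParam N M a) / (1 - supParam N M a) * supValDiff N M z zs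
        + (2 * supParam N M b * supParam N M c
              / ((1 - supParam N M a) * (1 - supParam N M c))
            + (1 + supParam N M a) / (1 - supParam N M a))
          * Mb * supKnotDiff N M x xs y ys δ :=
  chfis_stability_main_general N M x y xs ys z zs t ts a b c hD hDs hratio hsub F₁ F₂ G₁ G₂ Q₁ Q₂ hF
    hG hQ Mb δ hMb hδ hH1

end
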